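/- For every 1 ≤ p < ∞ there exists a constant A > 0, independent of n, such that for all n ∈ ℕ: ‖V_{2n} − V_n‖_p ≤ A·n^{1−1/p}, where ‖f‖_p = (∫_{−π}^{π}|f(t)|^p dt)^{1/p}. In particular, for p = 1, ‖V_{2n} − V_n‖_1 is bounded by an absolute constant. -/

import Mathlib

/-!
Summing `4 sin²(t/2) D_k(t) = cos(kt) - cos((k+1)t)` over `m ≤ k < 2m` telescopes to
`4 m sin²(t/2) V_m(t) = cos(mt) - cos(2mt)`, so `|V_m(t)| ≤ π² / (2 m t²)` on `(0, π]` by Jordan's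
inequality, besides the trivial `|V_m| ≤ 2m`. Using the first bound on `[1/n, π]` and the second on
`[0, 1/n]` bounds `‖V_{2n} - V_n‖₁` by an absolute constant, and the interpolation
`‖g‖_p ≤ ‖g‖_∞^{1-1/p} ‖g‖₁^{1/p}` with `‖V_{2n} - V_n‖_∞ ≤ 6n` gives the claim.
-/

open Real Finset MeasureTheory

noncomputable def dirichletK (k : ℕ) (t : ℝ) : ℝ :=
  1 / 2 + ∑ ν ∈ Finset.Icc 1 k, Real.cos ((ν : ℝ) * t)

noncomputable def vallee (m : ℕ) (t : ℝ) : ℝ :=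
  (1 / (m : ℝ)) * ∑ k ∈ Finset.Icc m (2 * m - 1), dirichletK k t

theorem integral_neg_eq_two_mul_integral_of_even {f : ℝ → ℝ} (hf : ∀ x, f (-x) = f x) {a : ℝ}
    (hint : IntervalIntegrable f volume (-a) a) :
    ∫ x in -a..a, f x = 2 * ∫ x in 0..a, f x := by
  have h0 : (0 : ℝ) ∈ Set.uIcc (-a) a := by
    rcases le_total 0 a with h | h
    · exact Set.mem_uIcc.mpr (Or.inl ⟨by linarith, h⟩)
    · exact Set.mem_uIcc.mpr (Or.inr ⟨h, by linarith⟩)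
  have hleft : ∫ x in -a..0, f x = ∫ x in 0..a, f x := by
    simpa [hf] using (intervalIntegral.integral_comp_neg (a := 0) (b := a) f).symm
  rw [← intervalIntegral.integral_add_adjacent_intervals
    (hint.mono_set (Set.uIcc_subset_uIcc_left h0))
    (hint.mono_set (Set.uIcc_subset_uIcc_right h0)), hleft, two_mul]

theorem integral_le_mul_add_div_of_le_div_sq {f : ℝ → ℝ} {b δ M K : ℝ}
    (hint : IntervalIntegrable f volume 0 b) (hδ : 0 < δ) (hδb : δ ≤ b) (hK : 0 ≤ K)
    (hM : ∀ t ∈ Set.Icc 0 δ, f t ≤ M) (hdecay : ∀ t ∈ Set.Icc δ b, f t ≤ K / t ^ 2) :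
    ∫ t in 0..b, f t ≤ M * δ + K / δ := by
  have hδmem : δ ∈ Set.uIcc 0 b := Set.mem_uIcc.mpr (Or.inl ⟨hδ.le, hδb⟩)
  have hnear : ∫ t in 0..δ, f t ≤ M * δ := by
    calc ∫ t in 0..δ, f t ≤ ∫ _t in 0..δ, M :=
          intervalIntegral.integral_mono_on hδ.le (hint.mono_set (Set.uIcc_subset_uIcc_left hδmem))
            intervalIntegrable_const hM
      _ = M * δ := by simp [mul_comm]
  have hderiv : ∀ t ∈ Set.uIcc δ b, HasDerivAt (fun t => -K * t⁻¹) (K / t ^ 2) t := by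
    intro t ht
    have ht₀ : t ≠ 0 := (hδ.trans_le (Set.uIcc_of_le hδb ▸ ht).1).ne'
    exact ((hasDerivAt_inv ht₀).const_mul (-K)).congr_deriv (by ring)
  have hcont : ContinuousOn (fun t => K / t ^ 2) (Set.uIcc δ b) := by
    refine continuousOn_const.div (continuousOn_pow 2) fun t ht => ?_
    exact pow_ne_zero 2 (hδ.trans_le (Set.uIcc_of_le hδb ▸ ht).1).ne'
  have hfar : ∫ t in δ..b, f t ≤ K / δ := by
    calc ∫ t in δ..b, f t ≤ ∫ t in δ..b, K / t ^ 2 :=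
          intervalIntegral.integral_mono_on hδb (hint.mono_set (Set.uIcc_subset_uIcc_right hδmem))
            hcont.intervalIntegrable hdecay
      _ = K / δ - K / b := by
          rw [intervalIntegral.integral_eq_sub_of_hasDerivAt hderiv hcont.intervalIntegrable]
          ring
      _ ≤ K / δ := sub_le_self _ (div_nonneg hK (hδ.le.trans hδb))
  rw [← intervalIntegral.integral_add_adjacent_intervals
    (hint.mono_set (Set.uIcc_subset_uIcc_left hδmem))
    (hint.mono_set (Set.uIcc_subset_uIcc_right hδmem))]
  linarith

theorem integral_abs_rpow_one_div_le {f : ℝ → ℝ} (hf : Continuous f) {a b M p : ℝ} (hab : a ≤ b)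
    (hp : 1 ≤ p) (hM : ∀ t, |f t| ≤ M) :
    (∫ t in a..b, |f t| ^ p) ^ (1 / p) ≤ M ^ (1 - 1 / p) * (∫ t in a..b, |f t|) ^ (1 / p) := by
  have hp₀ : 0 < p := by linarith
  have hM₀ : 0 ≤ M := (abs_nonneg _).trans (hM 0)
  have hpoint : ∀ t, |f t| ^ p ≤ M ^ (p - 1) * |f t| := fun t => by
    calc |f t| ^ p = |f t| ^ (p - 1) * |f t| ^ (1 : ℝ) := by
          rw [← rpow_add' (abs_nonneg _) (by linarith), sub_add_cancel]
      _ ≤ M ^ (p - 1) * |f t| := by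
          rw [rpow_one]
          gcongr
          exact hM t
  have hint : ∫ t in a..b, |f t| ^ p ≤ M ^ (p - 1) * ∫ t in a..b, |f t| := by
    rw [← intervalIntegral.integral_const_mul]
    exact intervalIntegral.integral_mono_on hab
      ((hf.abs.rpow_const fun _ => Or.inr hp₀.le).intervalIntegrable _ _)
      ((continuous_const.mul hf.abs).intervalIntegrable _ _) fun t _ => hpoint t
  have hint₀ : 0 ≤ ∫ t in a..b, |f t| :=
    intervalIntegral.integral_nonneg hab fun t _ => abs_nonneg _
  calc (∫ t in a..b, |f t| ^ p) ^ (1 / p)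
      ≤ (M ^ (p - 1) * ∫ t in a..b, |f t|) ^ (1 / p) := by
        gcongr
        exact intervalIntegral.integral_nonneg hab fun t _ => by positivity
    _ = M ^ (1 - 1 / p) * (∫ t in a..b, |f t|) ^ (1 / p) := by
        rw [mul_rpow (by positivity) hint₀, ← rpow_mul hM₀]
        congr 2
        field_simp

theorem four_mul_sin_sq_half_mul_dirichletK (k : ℕ) (t : ℝ) :
    4 * sin (t / 2) ^ 2 * dirichletK k t = cos (k * t) - cos ((k + 1 : ℕ) * t) := by
  have hsin : 4 * sin (t / 2) ^ 2 = 2 - 2 * cos t := by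
    rw [sin_sq_eq_half_sub, show 2 * (t / 2) = t by ring]; ring
  induction k with
  | zero => simp [dirichletK, hsin]; ring
  | succ k ih =>
    rw [dirichletK, Finset.sum_Icc_succ_top (by omega), ← add_assoc, mul_add, ← dirichletK, ih,
      hsin]
    have hprev : cos (k * t) = cos ((k + 1 : ℕ) * t - t) := by push_cast; ring_nf
    have hnext : cos ((k + 1 + 1 : ℕ) * t) = cos ((k + 1 : ℕ) * t + t) := by push_cast; ring_nf
    rw [hprev, hnext, cos_sub, cos_add]
    ring

theorem four_mul_sin_sq_half_mul_sum_dirichletK {a b : ℕ} (hab : a ≤ b) (t : ℝ) :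
    4 * sin (t / 2) ^ 2 * ∑ k ∈ Ico a b, dirichletK k t = cos (a * t) - cos (b * t) := by
  simp_rw [mul_sum, four_mul_sin_sq_half_mul_dirichletK]
  rw [← neg_sub, ← sum_Ico_sub (fun k : ℕ => cos (k * t)) hab, ← sum_neg_distrib]
  simp only [neg_sub]

-- At `m = 0` both sides vanish only because `(0 : ℝ)⁻¹ = 0`.
theorem vallee_eq_inv_mul_sum_Ico (m : ℕ) (t : ℝ) :
    vallee m t = (m : ℝ)⁻¹ * ∑ k ∈ Ico m (2 * m), dirichletK k t := by
  rcases Nat.eq_zero_or_pos m with rfl | hm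
  · simp [vallee]
  · rw [vallee, one_div, ← Ico_add_one_right_eq_Icc, Nat.sub_add_cancel (by omega)]

theorem abs_dirichletK_le (k : ℕ) (t : ℝ) : |dirichletK k t| ≤ k + 1 / 2 := by
  calc |dirichletK k t| ≤ |1 / 2| + ∑ ν ∈ Icc 1 k, |cos (ν * t)| :=
        (abs_add_le _ _).trans (add_le_add le_rfl (abs_sum_le_sum_abs _ _))
    _ ≤ 1 / 2 + ∑ _ν ∈ Icc 1 k, 1 := by
        gcongr with ν
        · norm_num
        · exact abs_cos_le_one _
    _ = k + 1 / 2 := by simp; ring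

theorem abs_vallee_le (m : ℕ) (t : ℝ) : |vallee m t| ≤ 2 * m := by
  rw [vallee_eq_inv_mul_sum_Ico, abs_mul, abs_inv, Nat.abs_cast]
  have hsum : |∑ k ∈ Ico m (2 * m), dirichletK k t| ≤ m * (2 * m) := by
    calc |∑ k ∈ Ico m (2 * m), dirichletK k t| ≤ ∑ k ∈ Ico m (2 * m), |dirichletK k t| :=
          abs_sum_le_sum_abs _ _
      _ ≤ ∑ _k ∈ Ico m (2 * m), (2 * m : ℝ) := by
          gcongr with k hk
          have hk : (k : ℝ) + 1 ≤ 2 * m := by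
            exact_mod_cast (mem_Ico.mp hk).2
          linarith [abs_dirichletK_le k t]
      _ = m * (2 * m) := by simp; left; omega
  calc (m : ℝ)⁻¹ * |∑ k ∈ Ico m (2 * m), dirichletK k t| ≤ (m : ℝ)⁻¹ * (m * (2 * m)) := by
        gcongr
    _ = 2 * m := by rcases eq_or_ne (m : ℝ) 0 with h | h <;> field_simp [h]

theorem abs_vallee_le_of_sin_ne_zero (m : ℕ) {t : ℝ} (ht : sin (t / 2) ≠ 0) :
    |vallee m t| ≤ 1 / (2 * m * sin (t / 2) ^ 2) := by
  have hs : 0 < 4 * sin (t / 2) ^ 2 := by positivity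
  have hsum : |∑ k ∈ Ico m (2 * m), dirichletK k t| ≤ 2 / (4 * sin (t / 2) ^ 2) := by
    rw [le_div_iff₀ hs, ← abs_of_pos hs, ← abs_mul, mul_comm,
      four_mul_sin_sq_half_mul_sum_dirichletK (by omega)]
    exact (abs_sub _ _).trans
      (by linarith [abs_cos_le_one (m * t), abs_cos_le_one ((2 * m : ℕ) * t)])
  rw [vallee_eq_inv_mul_sum_Ico, abs_mul, abs_inv, Nat.abs_cast]
  calc (m : ℝ)⁻¹ * |∑ k ∈ Ico m (2 * m), dirichletK k t|
      ≤ (m : ℝ)⁻¹ * (2 / (4 * sin (t / 2) ^ 2)) := by gcongr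
    _ = 1 / (2 * m * sin (t / 2) ^ 2) := by ring

theorem abs_vallee_le_div_sq (m : ℕ) {t : ℝ} (ht₀ : 0 < t) (htπ : t ≤ π) :
    |vallee m t| ≤ π ^ 2 / (2 * m * t ^ 2) := by
  have hsin : t / π ≤ sin (t / 2) := by
    have := mul_le_sin (x := t / 2) (by linarith) (by linarith)
    field_simp at this ⊢; linarith
  have hsin₀ : 0 < t / π := by positivity
  refine (abs_vallee_le_of_sin_ne_zero m (hsin₀.trans_le hsin).ne').trans ?_
  rcases Nat.eq_zero_or_pos m with rfl | hm
  · simp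
  calc 1 / (2 * m * sin (t / 2) ^ 2) ≤ 1 / (2 * m * (t / π) ^ 2) := by gcongr
    _ = π ^ 2 / (2 * m * t ^ 2) := by field_simp

theorem continuous_vallee (m : ℕ) : Continuous (vallee m) := by
  unfold vallee dirichletK
  fun_prop

theorem vallee_neg (m : ℕ) (t : ℝ) : vallee m (-t) = vallee m t := by
  simp [vallee, dirichletK]

theorem abs_vallee_two_mul_sub_le (n : ℕ) (t : ℝ) :
    |vallee (2 * n) t - vallee n t| ≤ 6 * n := by
  have h := abs_vallee_le (2 * n) t
  push_cast at h
  linarith [abs_sub (vallee (2 * n) t) (vallee n t), abs_vallee_le n t]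

theorem abs_vallee_two_mul_sub_le_div_sq (n : ℕ) {t : ℝ} (ht₀ : 0 < t) (htπ : t ≤ π) :
    |vallee (2 * n) t - vallee n t| ≤ 3 * π ^ 2 / (4 * n) / t ^ 2 := by
  have hsum : π ^ 2 / (2 * ((2 * n : ℕ) : ℝ) * t ^ 2) + π ^ 2 / (2 * n * t ^ 2)
      = 3 * π ^ 2 / (4 * n) / t ^ 2 := by
    push_cast; ring
  linarith [abs_sub (vallee (2 * n) t) (vallee n t), abs_vallee_le_div_sq (2 * n) ht₀ htπ,
    abs_vallee_le_div_sq n ht₀ htπ]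

theorem integral_abs_vallee_two_mul_sub_le {n : ℕ} (hn : 1 ≤ n) :
    ∫ t in (-π)..π, |vallee (2 * n) t - vallee n t| ≤ 27 := by
  have hn₀ : (0 : ℝ) < n := by exact_mod_cast hn
  have hδπ : 1 / (n : ℝ) ≤ π :=
    (div_le_one_of_le₀ (by exact_mod_cast hn) hn₀.le).trans (by linarith [pi_gt_three])
  have hcont : Continuous fun t => |vallee (2 * n) t - vallee n t| :=
    ((continuous_vallee _).sub (continuous_vallee _)).abs
  have hhalf := integral_le_mul_add_div_of_le_div_sq (hcont.intervalIntegrable 0 π)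
    (by positivity) hδπ (by positivity) (fun t _ => abs_vallee_two_mul_sub_le n t)
    fun t ht => abs_vallee_two_mul_sub_le_div_sq n ((one_div_pos.mpr hn₀).trans_le ht.1) ht.2
  have hbound : 6 * (n : ℝ) * (1 / n) + 3 * π ^ 2 / (4 * n) / (1 / n) = 6 + 3 * π ^ 2 / 4 := by
    field_simp
  have hπ : π ^ 2 < 10 := by nlinarith [pi_lt_d2, pi_pos]
  rw [integral_neg_eq_two_mul_integral_of_even (by simp [vallee_neg])
    (hcont.intervalIntegrable _ _)]
  linarith

/-- For every `1 ≤ p < ∞` there is a constant `A > 0`, independent of `n`,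
such that for all `n ≥ 1`: `‖V_{2n} − V_n‖_p ≤ A·n^{1−1/p}`, where
`‖f‖_p = (∫_{−π}^{π}|f|^p)^{1/p}`.  (For `p = 1` this gives a bound by an absolute
constant.) -/
theorem vallee_diff_norm_bound (p : ℝ) (hp : 1 ≤ p) :
    ∃ A : ℝ, 0 < A ∧ ∀ n : ℕ, 1 ≤ n →
      (∫ t in (-π)..π, |vallee (2 * n) t - vallee n t| ^ p) ^ (1 / p) ≤
        A * (n : ℝ) ^ (1 - 1 / p) := by
  refine ⟨6 ^ (1 - 1 / p) * 27 ^ (1 / p), by positivity, fun n hn => ?_⟩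
  calc (∫ t in (-π)..π, |vallee (2 * n) t - vallee n t| ^ p) ^ (1 / p)
      ≤ (6 * n) ^ (1 - 1 / p) * (∫ t in (-π)..π, |vallee (2 * n) t - vallee n t|) ^ (1 / p) :=
        integral_abs_rpow_one_div_le ((continuous_vallee _).sub (continuous_vallee _))
          (by linarith [pi_pos]) hp (abs_vallee_two_mul_sub_le n)
    _ ≤ (6 * n) ^ (1 - 1 / p) * 27 ^ (1 / p) := by
        gcongr
        · exact intervalIntegral.integral_nonneg (by linarith [pi_pos]) fun t _ => abs_nonneg _
        · exact integral_abs_vallee_two_mul_sub_le hn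
    _ = 6 ^ (1 - 1 / p) * 27 ^ (1 / p) * (n : ℝ) ^ (1 - 1 / p) := by
        rw [mul_rpow (by norm_num) (by positivity)]; ring
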